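/- arXiv:1206.0916 — 3 statements merged into one kernel-verified Lean document; each statement's English description precedes it below -/
import Mathlib

section
/- For the CIR model, the discretized informations satisfy I_Δ(α,β) = I_b(α,β)·(ln a/(a−1))²·a and J_Δ(α,β) = J_b(α,β)·(4a/3)·((a³−1)/(a−1))·(ln a/(a²−1))², where a = e^{αΔ}; and consequently J_Δ(α,β) ≤ I_Δ(α,β) for all Δ > 0. -/
/-!
With `a = e^{αΔ}` one has `D k = x₀ a^k` and `S k ∝ a^k`, so the sums defining `I_Δ` and
`J_Δ` are geometric series in `a`, `a²` and `a³`, which gives both closed forms. The comparison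
`J_Δ ≤ I_Δ` does not need them: it is the Cauchy–Schwarz inequality
`(∑ D_k²)² ≤ (∑ D_k² S_k)(∑ D_k² / S_k)` for the weights `D_k² ≥ 0` and `S_k > 0`.
-/

open Finset

theorem geom_sum_Icc_one {K : Type*} [DivisionRing K] {x : K} (hx : x ≠ 1) (n : ℕ) :
    ∑ i ∈ Icc 1 n, x ^ i = x * (x ^ n - 1) / (x - 1) := by
  rw [← Ico_add_one_right_eq_Icc, geom_sum_Ico hx (by omega), pow_succ', pow_one, mul_sub_one]

theorem Finset.sq_sum_div_sum_mul_le_sum_div {ι R : Type*} [Semifield R] [LinearOrder R]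
    [IsStrictOrderedRing R] [ExistsAddOfLE R] (s : Finset ι) {w S : ι → R}
    (hw : ∀ i ∈ s, 0 ≤ w i) (hS : ∀ i ∈ s, 0 < S i) :
    (∑ i ∈ s, w i) ^ 2 / ∑ i ∈ s, w i * S i ≤ ∑ i ∈ s, w i / S i := by
  refine div_le_of_le_mul₀ (sum_nonneg fun i hi => mul_nonneg (hw i hi) (hS i hi).le)
    (sum_nonneg fun i hi => div_nonneg (hw i hi) (hS i hi).le)
    (sum_sq_le_sum_mul_sum_of_sq_le_mul s (fun i hi => div_nonneg (hw i hi) (hS i hi).le)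
      (fun i hi => mul_nonneg (hw i hi) (hS i hi).le) fun i hi => ?_)
  have := (hS i hi).ne'
  exact le_of_eq (by field_simp)

section GeometricWeights

variable {K : Type*} [Field K] (x₀ c : K) {a : K} (n : ℕ)

theorem sum_sq_div_geometric (ha : a ≠ 0) (ha1 : a ≠ 1) :
    ∑ k ∈ Icc 1 n, (x₀ * a ^ k) ^ 2 / (c * a ^ k) =
      x₀ ^ 2 / c * (a * (a ^ n - 1) / (a - 1)) := by
  rw [← geom_sum_Icc_one ha1, mul_sum]
  refine sum_congr rfl fun k _ => ?_
  have := pow_ne_zero k ha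
  field_simp

theorem sum_sq_geometric (ha2 : a ^ 2 ≠ 1) :
    ∑ k ∈ Icc 1 n, (x₀ * a ^ k) ^ 2 =
      x₀ ^ 2 * (a ^ 2 * ((a ^ n) ^ 2 - 1) / (a ^ 2 - 1)) := by
  rw [← pow_right_comm, ← geom_sum_Icc_one ha2, mul_sum]
  exact sum_congr rfl fun k _ => by ring

theorem sum_sq_mul_geometric (ha3 : a ^ 3 ≠ 1) :
    ∑ k ∈ Icc 1 n, (x₀ * a ^ k) ^ 2 * (c * a ^ k) =
      x₀ ^ 2 * c * (a ^ 3 * ((a ^ n) ^ 3 - 1) / (a ^ 3 - 1)) := by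
  rw [← pow_right_comm, ← geom_sum_Icc_one ha3, mul_sum]
  exact sum_congr rfl fun k _ => by ring

end GeometricWeights

/-- For the CIR model the discretized informations satisfy
`I_Δ = I_b (ln a/(a−1))² a` and
`J_Δ = J_b (4a/3)((a³−1)/(a−1))(ln a/(a²−1))²`, with `a = e^{αΔ}`;
consequently `J_Δ ≤ I_Δ`. -/
theorem stmt13 (α β x₀ Δ : ℝ) (n : ℕ)
    (hα : 0 < α) (hβ : 0 < β) (hx₀ : 0 < x₀) (hΔ : 0 < Δ) (hn : 1 ≤ n)
    (T a : ℝ) (hTdef : T = n * Δ) (hadef : a = Real.exp (α * Δ))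
    (D S : ℕ → ℝ)
    (hD : ∀ k : ℕ, D k = x₀ * Real.exp (α * k * Δ))
    (hS : ∀ k : ℕ, S k = x₀ * β ^ 2 * ((a - 1) / (α * Δ)) * a ^ k)
    (IΔ JΔ Ib Jb : ℝ)
    (hIΔ : IΔ = Δ * ∑ k ∈ Finset.Icc 1 n, (D k) ^ 2 / S k)
    (hJΔ : JΔ = (Δ * ∑ k ∈ Finset.Icc 1 n, (D k) ^ 2) ^ 2
        / (Δ * ∑ k ∈ Finset.Icc 1 n, (D k) ^ 2 * S k))
    (hIb : Ib = x₀ * (Real.exp (α * T) - 1) / (β ^ 2 * α))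
    (hJb : Jb = 3 * x₀ / (4 * α * β ^ 2) * (Real.exp (2 * α * T) - 1) ^ 2
        / (Real.exp (3 * α * T) - 1)) :
    IΔ = Ib * (Real.log a / (a - 1)) ^ 2 * a ∧
      JΔ = Jb * (4 * a / 3) * ((a ^ 3 - 1) / (a - 1)) * (Real.log a / (a ^ 2 - 1)) ^ 2 ∧
      JΔ ≤ IΔ := by
  have ha : 1 < a := hadef ▸ Real.one_lt_exp_iff.2 (mul_pos hα hΔ)
  have hb : 1 < a ^ n := one_lt_pow₀ ha (by omega)
  have hlog : Real.log a = α * Δ := by rw [hadef, Real.log_exp]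
  have hexp (m : ℕ) : Real.exp (m * α * T) = (a ^ n) ^ m := by
    rw [hadef, ← pow_mul, ← Real.exp_nat_mul, hTdef]; push_cast; ring_nf
  have hDa (k : ℕ) : D k = x₀ * a ^ k := by
    rw [hD, hadef, ← Real.exp_nat_mul]; ring_nf
  have hS_pos : ∀ k ∈ Icc 1 n, 0 < S k := fun k _ => by
    rw [hS]; have := sub_pos.2 ha; positivity
  refine ⟨?_, ?_, ?_⟩
  · rw [hIΔ, hIb, show Real.exp (α * T) = a ^ n by simpa using hexp 1]
    simp only [hDa, hS]
    rw [sum_sq_div_geometric _ _ _ (by positivity) ha.ne', hlog]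
    field_simp [(sub_pos.2 ha).ne']
  · rw [hJΔ, hJb, show Real.exp (2 * α * T) = (a ^ n) ^ 2 by exact_mod_cast hexp 2,
      show Real.exp (3 * α * T) = (a ^ n) ^ 3 by exact_mod_cast hexp 3]
    simp only [hDa, hS]
    have ha2 : a ^ 2 ≠ 1 := (one_lt_pow₀ ha two_ne_zero).ne'
    have ha3 : a ^ 3 ≠ 1 := (one_lt_pow₀ ha three_ne_zero).ne'
    rw [sum_sq_geometric _ _ ha2, sum_sq_mul_geometric _ _ _ ha3, hlog]
    field_simp [(sub_pos.2 ha).ne', sub_ne_zero.2 ha2, sub_ne_zero.2 ha3,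
      sub_ne_zero.2 (one_lt_pow₀ hb three_ne_zero).ne']
  · rw [hIΔ, hJΔ, mul_pow, sq Δ, mul_assoc, mul_div_mul_left _ _ hΔ.ne', mul_div_assoc]
    exact mul_le_mul_of_nonneg_left
      (sq_sum_div_sum_mul_le_sum_div _ (fun k _ => sq_nonneg _) hS_pos) hΔ.le
end

section
/- Let x_{α₀} and x_α solve x' = b(α₀,x) and x' = b(α,x) respectively with the same initial condition, let Φ_α be the resolvent of the linearization y' = (∂b/∂x)(α, x_α(t)) y, and define N_k(α₀,α) = (x_{α₀}(t_k) − x_α(t_k)) − Φ_α(t_k,t_{k-1})(x_{α₀}(t_{k-1}) − x_α(t_{k-1})) and Γ(α₀,α;t) = b(α₀,x_{α₀}(t)) − b(α,x_α(t)) − (∂b/∂x)(α,x_α(t))(x_{α₀}(t) − x_α(t)). Then sup over k ∈ {1,…,n} and α in the compact parameter set of ‖N_k(α₀,α)/Δ − Γ(α₀,α;t_{k-1})‖ → 0 as Δ = T/n → 0. -/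
/-!
Fix `s = t_{k-1}` and `v = x_{α₀}(s) - x_α(s)`. The map `w(u) = (x_{α₀}(u) - x_α(u)) - Φ_α(u,s) v`
vanishes at `s`, satisfies `w(t_k) = N_k(α₀,α)`, and has derivative
`g(u) = b(α₀,x_{α₀}(u)) - b(α,x_α(u)) - ∂b(α,x_α(u)) Φ_α(u,s) v` with `g(s) = Γ(α₀,α;s)`.
By the mean value inequality, `‖N_k/Δ - Γ(α₀,α;s)‖ ≤ sup_{u ∈ [s, s+Δ]} ‖g(u) - g(s)‖`.

Grönwall's inequality keeps all trajectories in one closed ball, on which `‖∂b‖ ≤ D`, and gives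
`‖Φ_α(u,s) - 1‖ ≤ e^{D(u-s)} - 1`. So `g(u)` is a fixed continuous function, on a compact set, of
the point `(α, x_{α₀}(u), x_α(u), Φ_α(u,s) v)`, whose distance to its value at `u = s` tends to `0`
with `u - s` uniformly in `α` and `s`; uniform continuity on that compact set concludes.
-/

open Set Filter Metric Topology
open scoped NNReal

theorem IsCompact.exists_forall_dist_lt_of_tendsto {Z Y : Type*} [PseudoMetricSpace Z]
    [PseudoMetricSpace Y] {S : Set Z} {f : Z → Y} {ω : ℝ → ℝ} (hS : IsCompact S)
    (hf : ContinuousOn f S) (hω : Tendsto ω (𝓝 0) (𝓝 0)) :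
    ∀ ε > 0, ∃ δ > 0, ∀ h, |h| < δ → ∀ y ∈ S, ∀ z ∈ S, dist y z ≤ ω h → dist (f y) (f z) < ε := by
  intro ε hε
  obtain ⟨η, hη, hfη⟩ := Metric.uniformContinuousOn_iff.1
    (hS.uniformContinuousOn_of_continuous hf) ε hε
  obtain ⟨δ, hδ, hδη⟩ := Metric.eventually_nhds_iff.1 (hω.eventually_lt_const hη)
  exact ⟨δ, hδ, fun h hh y hy z hz hyz =>
    hfη y hy z hz (hyz.trans_lt (hδη (by rwa [Real.dist_0_eq_abs])))⟩

variable {E : Type*} [NormedAddCommGroup E] [NormedSpace ℝ E]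

theorem norm_sub_le_gronwallBound_of_lipschitzWith {f : ℝ → E} {F : E → E} {K : ℝ≥0}
    {ε a b : ℝ} (hF : LipschitzWith K F) (hε : ‖F (f a)‖ ≤ ε)
    (hf : ∀ t ∈ Icc a b, HasDerivAt f (F (f t)) t) :
    ∀ t ∈ Icc a b, ‖f t - f a‖ ≤ gronwallBound 0 K ε (t - a) := by
  refine norm_le_gronwallBound_of_norm_deriv_right_le (f' := fun t => F (f t))
    (fun t ht => ((hf t ht).continuousAt.sub continuousAt_const).continuousWithinAt)
    (fun t ht => ((hf t (Ico_subset_Icc_self ht)).sub_const (f a)).hasDerivWithinAt)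
    (by simp) fun t _ => ?_
  calc ‖F (f t)‖ ≤ ‖F (f t) - F (f a)‖ + ‖F (f a)‖ := norm_le_norm_sub_add _ _
    _ ≤ K * ‖f t - f a‖ + ε := add_le_add (hF.norm_sub_le _ _) hε

theorem norm_sub_one_le_gronwallBound {R : Type*} [NormedRing R] [NormedAlgebra ℝ R]
    {Ψ A : ℝ → R} {D a b : ℝ} (hΨa : Ψ a = 1) (hΨ : ∀ t ∈ Icc a b, HasDerivAt Ψ (A t * Ψ t) t)
    (hA : ∀ t ∈ Ico a b, ‖A t‖ ≤ D) :
    ∀ t ∈ Icc a b, ‖Ψ t - 1‖ ≤ gronwallBound 0 D D (t - a) := by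
  refine norm_le_gronwallBound_of_norm_deriv_right_le (f' := fun t => A t * Ψ t)
    (fun t ht => ((hΨ t ht).continuousAt.sub continuousAt_const).continuousWithinAt)
    (fun t ht => ((hΨ t (Ico_subset_Icc_self ht)).sub_const 1).hasDerivWithinAt)
    (by simp [hΨa]) fun t ht => ?_
  calc ‖A t * Ψ t‖ = ‖A t * (Ψ t - 1) + A t‖ := by rw [mul_sub, mul_one, sub_add_cancel]
    _ ≤ ‖A t‖ * ‖Ψ t - 1‖ + ‖A t‖ := (norm_add_le _ _).trans (by gcongr; exact norm_mul_le _ _)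
    _ ≤ D * ‖Ψ t - 1‖ + D := by gcongr; exacts [hA t ht, hA t ht]

theorem ContinuousLinearMap.norm_apply_sub_self_le {Ψ : E →L[ℝ] E} {v : E} {g r : ℝ}
    (hΨ : ‖Ψ - 1‖ ≤ g) (hv : ‖v‖ ≤ r) : ‖Ψ v - v‖ ≤ r * g :=
  calc ‖Ψ v - v‖ = ‖(Ψ - 1) v‖ := by simp
    _ ≤ ‖Ψ - 1‖ * ‖v‖ := (Ψ - 1).le_opNorm v
    _ ≤ r * g := by
      rw [mul_comm r]
      exact mul_le_mul hΨ hv (norm_nonneg _) ((norm_nonneg _).trans hΨ)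

theorem norm_inv_smul_sub_sub_le_of_hasDerivAt {w g : ℝ → E} {s Δ η : ℝ} (hΔ : 0 < Δ)
    (hw : ∀ u ∈ Icc s (s + Δ), HasDerivAt w (g u) u)
    (hg : ∀ u ∈ Icc s (s + Δ), ‖g u - g s‖ ≤ η) :
    ‖Δ⁻¹ • (w (s + Δ) - w s) - g s‖ ≤ η := by
  have hmvt := norm_image_sub_le_of_norm_deriv_le_segment'
    (f := fun u => w u - (u - s) • g s) (f' := fun u => g u - g s)
    (fun u hu => by
      simpa only [one_smul] using
        ((hw u hu).fun_sub (((hasDerivAt_id' u).sub_const s).smul_const (g s))).hasDerivWithinAt)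
    (fun u hu => hg u (Ico_subset_Icc_self hu)) (s + Δ) ⟨by linarith, le_rfl⟩
  simp only [add_sub_cancel_left, sub_self, zero_smul, sub_zero] at hmvt
  calc ‖Δ⁻¹ • (w (s + Δ) - w s) - g s‖ = Δ⁻¹ * ‖w (s + Δ) - Δ • g s - w s‖ := by
        rw [← norm_smul_of_nonneg (inv_nonneg.2 hΔ.le)]
        congr 1
        simp only [smul_sub, smul_smul, inv_mul_cancel₀ hΔ.ne', one_smul]
        abel
    _ ≤ Δ⁻¹ * (η * Δ) := by gcongr
    _ = η := by field_simp

theorem norm_inv_smul_linearizationDefect_sub_le {X₀ X : ℝ → E} {F₀ F : E → E}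
    {A : E → E →L[ℝ] E} {Ψ : ℝ → E →L[ℝ] E} {s Δ η : ℝ} (hΔ : 0 < Δ)
    (hX₀ : ∀ t, HasDerivAt X₀ (F₀ (X₀ t)) t) (hX : ∀ t, HasDerivAt X (F (X t)) t)
    (hΨs : Ψ s = 1) (hΨ : ∀ t, HasDerivAt Ψ (A (X t) * Ψ t) t)
    (hη : ∀ u ∈ Icc s (s + Δ), ‖F₀ (X₀ u) - F (X u) - A (X u) (Ψ u (X₀ s - X s))
        - (F₀ (X₀ s) - F (X s) - A (X s) (X₀ s - X s))‖ ≤ η) :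
    ‖Δ⁻¹ • (X₀ (s + Δ) - X (s + Δ) - Ψ (s + Δ) (X₀ s - X s))
        - (F₀ (X₀ s) - F (X s) - A (X s) (X₀ s - X s))‖ ≤ η := by
  have hw : ∀ u, HasDerivAt (fun u => X₀ u - X u - Ψ u (X₀ s - X s))
      (F₀ (X₀ u) - F (X u) - A (X u) (Ψ u (X₀ s - X s))) u := fun u => by
    simpa only [mul_apply_eq_comp, map_zero, add_zero] using
      ((hX₀ u).fun_sub (hX u)).fun_sub ((hΨ u).clm_apply (hasDerivAt_const u (X₀ s - X s)))
  have hmain := norm_inv_smul_sub_sub_le_of_hasDerivAt (s := s) hΔ (fun u _ => hw u)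
    (by simpa only [hΨs, one_apply_eq_self] using hη)
  simpa only [hΨs, one_apply_eq_self, sub_self, sub_zero] using hmain

section UniformBounds

variable {P : Type*} {K : Set P} {b : P → E → E} {Db : P → E → E →L[ℝ] E}
  {x : P → ℝ → E} {Φ : P → ℝ → ℝ → E →L[ℝ] E} {T : ℝ}

theorem exists_forall_mem_closedBall_of_lipschitzWith [TopologicalSpace P] (hK : IsCompact K)
    {x₀ : E} {L : ℝ≥0} (hb : ContinuousOn (fun α => b α x₀) K)
    (hLip : ∀ α ∈ K, LipschitzWith L (b α)) (hx0 : ∀ α ∈ K, x α 0 = x₀)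
    (hx : ∀ α ∈ K, ∀ t, HasDerivAt (x α) (b α (x α t)) t) :
    ∃ R, ∀ α ∈ K, ∀ t ∈ Icc 0 T, x α t ∈ closedBall x₀ R := by
  obtain ⟨B, hB⟩ := hK.exists_bound_of_continuousOn hb
  refine ⟨gronwallBound 0 L B T, fun α hα t ht => ?_⟩
  have hgron := norm_sub_le_gronwallBound_of_lipschitzWith (ε := B) (hLip α hα)
    (by rw [hx0 α hα]; exact hB α hα) (fun u _ => hx α hα u) t ht
  rw [hx0 α hα, sub_zero] at hgron
  rw [mem_closedBall, dist_eq_norm]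
  exact hgron.trans (gronwallBound_mono le_rfl ((norm_nonneg _).trans (hB α hα)) L.2 ht.2)

theorem exists_forall_norm_sub_le_mul [TopologicalSpace P] {C : Set E} (hK : IsCompact K)
    (hC : IsCompact C) (hb : Continuous fun q : P × E => b q.1 q.2)
    (hxC : ∀ α ∈ K, ∀ t ∈ Icc 0 T, x α t ∈ C)
    (hx : ∀ α ∈ K, ∀ t, HasDerivAt (x α) (b α (x α t)) t) :
    ∃ M, ∀ α ∈ K, ∀ s ∈ Icc 0 T, ∀ u ∈ Icc s T, ‖x α u - x α s‖ ≤ M * (u - s) := by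
  obtain ⟨M, hM⟩ := (hK.prod hC).exists_bound_of_continuousOn hb.continuousOn
  exact ⟨M, fun α hα s hs u hu => norm_image_sub_le_of_norm_deriv_le_segment'
    (fun t _ => (hx α hα t).hasDerivWithinAt)
    (fun t ht => hM (α, x α t) ⟨hα, hxC α hα t ⟨hs.1.trans ht.1, ht.2.le⟩⟩) u hu⟩

theorem exists_forall_norm_resolvent_sub_one_le [TopologicalSpace P] {C : Set E} (hK : IsCompact K)
    (hC : IsCompact C) (hDb : Continuous fun q : P × E => Db q.1 q.2)
    (hxC : ∀ α ∈ K, ∀ t ∈ Icc 0 T, x α t ∈ C) (hΦ1 : ∀ α ∈ K, ∀ s, Φ α s s = 1)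
    (hΦ : ∀ α ∈ K, ∀ s t, HasDerivAt (fun u => Φ α u s) (Db α (x α t) * Φ α t s) t) :
    ∃ D, 0 ≤ D ∧ ∀ α ∈ K, ∀ s ∈ Icc 0 T, ∀ u ∈ Icc s T,
      ‖Φ α u s - 1‖ ≤ gronwallBound 0 D D (u - s) := by
  obtain ⟨D, hD⟩ := (hK.prod hC).exists_bound_of_continuousOn hDb.continuousOn
  exact ⟨max D 0, le_max_right _ _, fun α hα s hs u hu =>
    norm_sub_one_le_gronwallBound (Ψ := fun u => Φ α u s) (hΦ1 α hα s)
      (fun t _ => hΦ α hα s t) (fun t ht => (hD (α, x α t)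
        ⟨hα, hxC α hα t ⟨hs.1.trans ht.1, ht.2.le⟩⟩).trans (le_max_left _ _)) u hu⟩

theorem exists_forall_norm_sub_lt_of_uniform_bounds [PseudoMetricSpace P] [ProperSpace E]
    {α₀ : P} {x₀ : E} {R M D : ℝ} (hK : IsCompact K)
    (hb : Continuous fun q : P × E => b q.1 q.2) (hDb : Continuous fun q : P × E => Db q.1 q.2)
    (hα₀ : α₀ ∈ K) (hR : ∀ α ∈ K, ∀ t ∈ Icc 0 T, x α t ∈ closedBall x₀ R)
    (hM : ∀ α ∈ K, ∀ s ∈ Icc 0 T, ∀ u ∈ Icc s T, ‖x α u - x α s‖ ≤ M * (u - s))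
    (hD : 0 ≤ D) (hΦD : ∀ α ∈ K, ∀ s ∈ Icc 0 T, ∀ u ∈ Icc s T,
      ‖Φ α u s - 1‖ ≤ gronwallBound 0 D D (u - s))
    (hΦ1 : ∀ α ∈ K, ∀ s, Φ α s s = 1) :
    ∀ ε > 0, ∃ δ > 0, ∀ α ∈ K, ∀ s ∈ Icc 0 T, ∀ u ∈ Icc s T, u - s < δ →
      ‖b α₀ (x α₀ u) - b α (x α u) - Db α (x α u) (Φ α u s (x α₀ s - x α s))
        - (b α₀ (x α₀ s) - b α (x α s) - Db α (x α s) (x α₀ s - x α s))‖ < ε := by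
  intro ε hε
  set G := gronwallBound 0 D D
  have hG : Continuous G :=
    continuous_iff_continuousAt.2 fun h => (hasDerivAt_gronwallBound 0 D D h).continuousAt
  set S := K ×ˢ (closedBall x₀ R ×ˢ (closedBall x₀ R ×ˢ closedBall (0 : E) (2 * R * (1 + G T))))
  have hS : IsCompact S := hK.prod ((isCompact_closedBall _ _).prod
    ((isCompact_closedBall _ _).prod (isCompact_closedBall _ _)))
  have hF : Continuous fun q : P × E × E × E =>
      b α₀ q.2.1 - b q.1 q.2.2.1 - Db q.1 q.2.2.1 q.2.2.2 := by
    have h₀ := hb.comp (show Continuous fun q : P × E × E × E => (α₀, q.2.1) by fun_prop)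
    have h₁ := hb.comp (show Continuous fun q : P × E × E × E => (q.1, q.2.2.1) by fun_prop)
    have h₂ := hDb.comp (show Continuous fun q : P × E × E × E => (q.1, q.2.2.1) by fun_prop)
    exact (h₀.sub h₁).sub (h₂.clm_apply (by fun_prop))
  obtain ⟨δ, hδ, hδε⟩ := hS.exists_forall_dist_lt_of_tendsto hF.continuousOn
    (ω := fun h => max (M * h) (2 * R * G h))
    (by simpa [G, gronwallBound_x0] using
      ((continuous_const_mul M).max (continuous_const.mul hG)).tendsto 0) ε hε
  refine ⟨δ, hδ, fun α hα s hs u hu hus => ?_⟩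
  set v := x α₀ s - x α s
  have hR0 : 0 ≤ R := dist_nonneg.trans (hR α hα s hs)
  have hv : ‖v‖ ≤ 2 * R := by
    rw [← dist_eq_norm, two_mul]
    exact (dist_triangle_right _ _ x₀).trans (add_le_add (hR α₀ hα₀ s hs) (hR α hα s hs))
  have hΦv : ∀ u ∈ Icc s T, ‖Φ α u s v - v‖ ≤ 2 * R * G (u - s) := fun u hu =>
    ContinuousLinearMap.norm_apply_sub_self_le (hΦD α hα s hs u hu) hv
  let γ : ℝ → P × E × E × E := fun u => (α, x α₀ u, x α u, Φ α u s v)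
  have hγS : ∀ u ∈ Icc s T, γ u ∈ S := fun u hu => by
    have huI : u ∈ Icc 0 T := ⟨hs.1.trans hu.1, hu.2⟩
    refine ⟨hα, hR α₀ hα₀ u huI, hR α hα u huI, ?_⟩
    rw [mem_closedBall_zero_iff]
    calc ‖Φ α u s v‖ ≤ ‖v‖ + ‖Φ α u s v - v‖ := norm_le_norm_add_norm_sub' _ _
      _ ≤ 2 * R + 2 * R * G T := add_le_add hv ((hΦv u hu).trans (by
        gcongr; exact gronwallBound_mono le_rfl hD hD (by linarith [hs.1, hu.2])))
      _ = 2 * R * (1 + G T) := by ring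
  have hdist : dist (γ u) (γ s) ≤ max (M * (u - s)) (2 * R * G (u - s)) := by
    have hMα₀ := hM α₀ hα₀ s hs u hu
    simp only [γ, Prod.dist_eq, dist_self, dist_eq_norm, hΦ1 α hα]
    refine max_le (le_max_of_le_left ((norm_nonneg _).trans hMα₀))
      (max_le (le_max_of_le_left hMα₀) (max_le (le_max_of_le_left (hM α hα s hs u hu))
        (le_max_of_le_right (hΦv u hu))))
  simpa [γ, dist_eq_norm, hΦ1 α hα] using hδε (u - s)
    (by rwa [abs_of_nonneg (sub_nonneg.2 hu.1)]) _ (hγS u hu) _ (hγS s ⟨le_rfl, hs.2⟩) hdist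

end UniformBounds

theorem stmt15_general {p a : ℕ} (T : ℝ) (hT : 0 < T)
    (Ka : Set (Fin a → ℝ)) (hKa : IsCompact Ka)
    (b : (Fin a → ℝ) → (Fin p → ℝ) → (Fin p → ℝ))
    (hb : Continuous fun q : (Fin a → ℝ) × (Fin p → ℝ) => b q.1 q.2)
    (L : NNReal) (hLip : ∀ α ∈ Ka, LipschitzWith L (b α))
    (Db : (Fin a → ℝ) → (Fin p → ℝ) → ((Fin p → ℝ) →L[ℝ] (Fin p → ℝ)))
    (hDbcont : Continuous fun q : (Fin a → ℝ) × (Fin p → ℝ) => Db q.1 q.2)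
    (x₀ : Fin p → ℝ) (α₀ : Fin a → ℝ) (hα₀ : α₀ ∈ Ka)
    (x : (Fin a → ℝ) → ℝ → (Fin p → ℝ))
    (hx0 : ∀ α ∈ Ka, x α 0 = x₀)
    (hx : ∀ α ∈ Ka, ∀ t, HasDerivAt (x α) (b α (x α t)) t)
    (Φ : (Fin a → ℝ) → ℝ → ℝ → ((Fin p → ℝ) →L[ℝ] (Fin p → ℝ)))
    (hΦ1 : ∀ α ∈ Ka, ∀ s : ℝ, Φ α s s = 1)
    (hΦ : ∀ α ∈ Ka, ∀ s t : ℝ,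
      HasDerivAt (fun u => Φ α u s) (Db α (x α t) * Φ α t s) t) :
    ∀ ε > 0, ∃ δ > 0, ∀ n : ℕ, 1 ≤ n → T / n < δ →
      ∀ k ∈ Finset.Icc 1 n, ∀ α ∈ Ka,
        ‖(T / n)⁻¹ •
              ((x α₀ ((k : ℝ) * (T / n)) - x α ((k : ℝ) * (T / n)))
                - Φ α ((k : ℝ) * (T / n)) (((k : ℝ) - 1) * (T / n))
                    (x α₀ (((k : ℝ) - 1) * (T / n)) - x α (((k : ℝ) - 1) * (T / n))))
            - (b α₀ (x α₀ (((k : ℝ) - 1) * (T / n))) - b α (x α (((k : ℝ) - 1) * (T / n)))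
                - Db α (x α (((k : ℝ) - 1) * (T / n)))
                    (x α₀ (((k : ℝ) - 1) * (T / n)) - x α (((k : ℝ) - 1) * (T / n))))‖ < ε := by
  obtain ⟨R, hR⟩ := exists_forall_mem_closedBall_of_lipschitzWith (T := T) hKa
    (hb.comp (continuous_id.prodMk continuous_const)).continuousOn hLip hx0 hx
  obtain ⟨M, hM⟩ := exists_forall_norm_sub_le_mul hKa (isCompact_closedBall x₀ R) hb hR hx
  obtain ⟨D, hD, hΦD⟩ :=
    exists_forall_norm_resolvent_sub_one_le hKa (isCompact_closedBall x₀ R) hDbcont hR hΦ1 hΦ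
  intro ε hε
  obtain ⟨δ, hδ, hδε⟩ := exists_forall_norm_sub_lt_of_uniform_bounds hKa hb hDbcont hα₀ hR hM hD
    hΦD hΦ1 (ε / 2) (half_pos hε)
  refine ⟨δ, hδ, fun n hn hnδ k hk α hα => ?_⟩
  obtain ⟨hk1, hkn⟩ := Finset.mem_Icc.1 hk
  set Δ := T / n
  have hn0 : (0 : ℝ) < n := by exact_mod_cast hn
  have hΔ : 0 < Δ := div_pos hT hn0
  set s := ((k : ℝ) - 1) * Δ
  have hkΔ : (k : ℝ) * Δ = s + Δ := by ring
  have hsΔ : s + Δ ≤ T := by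
    calc s + Δ = (k : ℝ) * Δ := hkΔ.symm
      _ ≤ n * Δ := by gcongr
      _ = T := mul_div_cancel₀ T hn0.ne'
  have hs : s ∈ Icc 0 T := ⟨mul_nonneg (sub_nonneg.2 (by exact_mod_cast hk1)) hΔ.le, by linarith⟩
  rw [hkΔ]
  refine (norm_inv_smul_linearizationDefect_sub_le (Ψ := fun u => Φ α u s) hΔ (hx α₀ hα₀)
    (hx α hα) (hΦ1 α hα s) (hΦ α hα s) fun u hu => ?_).trans_lt (half_lt_self hε)
  exact (hδε α hα s hs u ⟨hu.1, hu.2.trans hsΔ⟩ (by linarith [hu.2])).le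

/-- Uniform approximation `N_k(α₀,α)/Δ ≈ Γ(α₀,α;t_{k-1})`, where
`N_k(α₀,α) = (x_{α₀}(t_k) − x_α(t_k)) − Φ_α(t_k,t_{k-1})(x_{α₀}(t_{k-1}) − x_α(t_{k-1}))` and
`Γ(α₀,α;t) = b(α₀,x_{α₀}(t)) − b(α,x_α(t)) − ∂b/∂x(α,x_α(t))(x_{α₀}(t) − x_α(t))`,
uniformly over `k ∈ {1,…,n}` and `α` in the compact parameter set, as `Δ = T/n → 0`. -/
theorem stmt15 {p a : ℕ} (T : ℝ) (hT : 0 < T)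
    (Ka : Set (Fin a → ℝ)) (hKa : IsCompact Ka)
    (b : (Fin a → ℝ) → (Fin p → ℝ) → (Fin p → ℝ))
    (hb : Continuous fun q : (Fin a → ℝ) × (Fin p → ℝ) => b q.1 q.2)
    (hbC2 : ∀ α ∈ Ka, ContDiff ℝ 2 (b α))
    (L : NNReal) (hLip : ∀ α ∈ Ka, LipschitzWith L (b α))
    (Db : (Fin a → ℝ) → (Fin p → ℝ) → ((Fin p → ℝ) →L[ℝ] (Fin p → ℝ)))
    (hDb : ∀ α ∈ Ka, ∀ y, HasFDerivAt (b α) (Db α y) y)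
    (hDbcont : Continuous fun q : (Fin a → ℝ) × (Fin p → ℝ) => Db q.1 q.2)
    (x₀ : Fin p → ℝ) (α₀ : Fin a → ℝ) (hα₀ : α₀ ∈ Ka)
    (x : (Fin a → ℝ) → ℝ → (Fin p → ℝ))
    (hx0 : ∀ α ∈ Ka, x α 0 = x₀)
    (hx : ∀ α ∈ Ka, ∀ t, HasDerivAt (x α) (b α (x α t)) t)
    (Φ : (Fin a → ℝ) → ℝ → ℝ → ((Fin p → ℝ) →L[ℝ] (Fin p → ℝ)))
    (hΦ1 : ∀ α ∈ Ka, ∀ s : ℝ, Φ α s s = 1)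
    (hΦ : ∀ α ∈ Ka, ∀ s t : ℝ,
      HasDerivAt (fun u => Φ α u s) (Db α (x α t) * Φ α t s) t) :
    ∀ ε > 0, ∃ δ > 0, ∀ n : ℕ, 1 ≤ n → T / n < δ →
      ∀ k ∈ Finset.Icc 1 n, ∀ α ∈ Ka,
        ‖(T / n)⁻¹ •
              ((x α₀ ((k : ℝ) * (T / n)) - x α ((k : ℝ) * (T / n)))
                - Φ α ((k : ℝ) * (T / n)) (((k : ℝ) - 1) * (T / n))
                    (x α₀ (((k : ℝ) - 1) * (T / n)) - x α (((k : ℝ) - 1) * (T / n))))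
            - (b α₀ (x α₀ (((k : ℝ) - 1) * (T / n))) - b α (x α (((k : ℝ) - 1) * (T / n)))
                - Db α (x α (((k : ℝ) - 1) * (T / n)))
                    (x α₀ (((k : ℝ) - 1) * (T / n)) - x α (((k : ℝ) - 1) * (T / n))))‖ < ε :=
  stmt15_general T hT Ka hKa b hb L hLip Db hDbcont x₀ α₀ hα₀ x hx0 hx Φ hΦ1 hΦ
end

section
/- Let (X_{n,k})_{1≤k≤n} be random variables with X_{n,k} measurable with respect to a filtration (F_k), such that Σ_{k=1}^n E[X_{n,k} | F_{k-1}] → U in probability for some random variable U, and Σ_{k=1}^n E[X_{n,k}² | F_{k-1}] → 0 in probability. Then Σ_{k=1}^n X_{n,k} → U in probability. -/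
/-!
Subtracting the predictable parts `E[X_{n,k} | F_{k-1}]`, whose sum tends to `U` by assumption,
leaves a martingale-difference array `Y_{n,k}` with `E[Y_{n,k}² | F_{k-1}] ≤ E[X_{n,k}² | F_{k-1}]`.
Stop the martingale `∑ Y_{n,k}` before the predictable bound `∑_{i ≤ k} E[X_{n,i}² | F_{i-1}]`
exceeds `η`: its increments stay orthogonal, so its second moment is at most `η`, and it coincides
with `∑ Y_{n,k}` unless the whole bound exceeds `η`. Chebyshev's inequality gives
`P(|∑ Y_{n,k}| ≥ ε) ≤ η / ε² + P(∑ E[X_{n,k}² | F_{k-1}] > η)`, and `η → 0` ends the proof.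
-/

open MeasureTheory Filter
open scoped Topology

section Development

variable {Ω : Type*} {m0 : MeasurableSpace Ω} {μ : Measure Ω}

theorem condExp_sub_condExp_ae_eq_zero {m : MeasurableSpace Ω} (hm : m ≤ m0)
    [SigmaFinite (μ.trim hm)] {X : Ω → ℝ} (hX : Integrable X μ) : μ[X - μ[X|m]|m] =ᵐ[μ] 0 := by
  filter_upwards [condExp_sub hX integrable_condExp m] with ω hω
  rw [hω, condExp_of_stronglyMeasurable hm stronglyMeasurable_condExp integrable_condExp]
  simp

theorem integral_mul_eq_zero_of_condExp_eq_zero {m : MeasurableSpace Ω} (hm : m ≤ m0)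
    [SigmaFinite (μ.trim hm)] {W Z : Ω → ℝ} (hW : StronglyMeasurable[m] W)
    (hWZ : Integrable (W * Z) μ) (hZ : Integrable Z μ) (hZm : μ[Z|m] =ᵐ[μ] 0) :
    ∫ ω, W ω * Z ω ∂μ = 0 := by
  calc ∫ ω, W ω * Z ω ∂μ = ∫ ω, (μ[W * Z|m]) ω ∂μ := (integral_condExp hm).symm
    _ = ∫ ω, W ω * (μ[Z|m]) ω ∂μ :=
        integral_congr_ae (condExp_mul_of_stronglyMeasurable_left hW hWZ hZ)
    _ = 0 := by
        rw [integral_congr_ae (hZm.mono fun ω hω => by rw [hω, Pi.zero_apply, mul_zero])]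
        simp

theorem sum_ite_partialSum_le {g : ℕ → ℝ} (hg : ∀ k, 0 ≤ g k) {η : ℝ} (hη : 0 ≤ η) (n : ℕ) :
    ∑ k ∈ Finset.Icc 1 n, (if ∑ i ∈ Finset.Icc 1 k, g i ≤ η then g k else 0) ≤ η := by
  induction n with
  | zero => simpa using hη
  | succ n ih =>
    by_cases h : ∑ i ∈ Finset.Icc 1 (n + 1), g i ≤ η
    · refine le_trans (Finset.sum_le_sum fun k _ => ?_) h
      split_ifs <;> simp [hg k]
    · rwa [Finset.sum_Icc_succ_top (by omega), if_neg h, add_zero]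

theorem meas_ge_le_integral_sq_div_sq [IsFiniteMeasure μ] {T : Ω → ℝ}
    (hT : Integrable (fun ω => T ω ^ 2) μ) {ε : ℝ} (hε : 0 < ε) :
    μ {ω | ε ≤ |T ω|} ≤ ENNReal.ofReal ((∫ ω, T ω ^ 2 ∂μ) / ε ^ 2) := by
  have hset : {ω | ε ≤ |T ω|} = {ω | ε ^ 2 ≤ T ω ^ 2} := Set.ext fun ω =>
    (sq_le_sq₀ hε.le (abs_nonneg _)).symm.trans (by rw [sq_abs]; rfl)
  have hmarkov := mul_meas_ge_le_integral_of_nonneg (.of_forall fun ω => sq_nonneg (T ω)) hT (ε ^ 2)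
  rw [hset, ← ofReal_measureReal, ENNReal.ofReal_le_ofReal_iff (by positivity)]
  rwa [le_div_iff₀ (by positivity), mul_comm]

def partialSumSublevel (A : ℕ → Ω → ℝ) (η : ℝ) (k : ℕ) : Set Ω :=
  {ω | ∑ i ∈ Finset.Icc 1 k, A i ω ≤ η}

theorem measurableSet_partialSumSublevel (𝒢 : Filtration ℕ m0) {A : ℕ → Ω → ℝ}
    (hA : ∀ k, StronglyMeasurable[𝒢 (k - 1)] (A k)) (η : ℝ) (k : ℕ) :
    MeasurableSet[𝒢 (k - 1)] (partialSumSublevel A η k) := by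
  refine (Finset.stronglyMeasurable_fun_sum _ fun i hi => (hA i).mono (𝒢.mono ?_)).measurable
    measurableSet_Iic
  have := (Finset.mem_Icc.mp hi).2
  omega

/-- As `0 - 1 = 0` in `ℕ`, the condition at `k = 0` forces `Y 0 =ᵐ[μ] 0`. -/
structure IsL2MartingaleDiff (μ : Measure Ω) (𝒢 : Filtration ℕ m0) (Y : ℕ → Ω → ℝ) : Prop where
  stronglyMeasurable : ∀ k, StronglyMeasurable[𝒢 k] (Y k)
  memLp : ∀ k, MemLp (Y k) 2 μ
  condExp_eq_zero : ∀ k, μ[Y k|𝒢 (k - 1)] =ᵐ[μ] 0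

theorem isL2MartingaleDiff_sub_condExp [IsFiniteMeasure μ] (𝒢 : Filtration ℕ m0)
    {X : ℕ → Ω → ℝ} (hX : ∀ k, StronglyMeasurable[𝒢 k] (X k)) (hXL2 : ∀ k, MemLp (X k) 2 μ) :
    IsL2MartingaleDiff μ 𝒢 fun k => X k - μ[X k|𝒢 (k - 1)] where
  stronglyMeasurable k := (hX k).sub (stronglyMeasurable_condExp.mono (𝒢.mono (k.sub_le 1)))
  memLp k := (hXL2 k).sub ((hXL2 k).condExp one_le_two)
  condExp_eq_zero k := condExp_sub_condExp_ae_eq_zero (𝒢.le _) ((hXL2 k).integrable one_le_two)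

namespace IsL2MartingaleDiff

variable {𝒢 : Filtration ℕ m0} {Y A : ℕ → Ω → ℝ}

theorem integral_sq_sum [IsFiniteMeasure μ] (hY : IsL2MartingaleDiff μ 𝒢 Y) (s : Finset ℕ) :
    ∫ ω, (∑ k ∈ s, Y k ω) ^ 2 ∂μ = ∑ k ∈ s, ∫ ω, Y k ω ^ 2 ∂μ := by
  have hint : ∀ j k, Integrable (fun ω => Y j ω * Y k ω) μ := fun j k =>
    (hY.memLp j).integrable_mul (hY.memLp k)
  have hcross : ∀ j k, j < k → ∫ ω, Y j ω * Y k ω ∂μ = 0 := fun j k hjk =>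
    integral_mul_eq_zero_of_condExp_eq_zero (𝒢.le _)
      ((hY.stronglyMeasurable j).mono (𝒢.mono (by omega))) (hint j k)
      ((hY.memLp k).integrable one_le_two) (hY.condExp_eq_zero k)
  calc ∫ ω, (∑ k ∈ s, Y k ω) ^ 2 ∂μ = ∑ j ∈ s, ∑ k ∈ s, ∫ ω, Y j ω * Y k ω ∂μ := by
        simp_rw [sq, Finset.sum_mul_sum]
        rw [integral_finsetSum _ fun j _ => integrable_finsetSum _ fun k _ => hint j k]
        exact Finset.sum_congr rfl fun j _ => integral_finsetSum _ fun k _ => hint j k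
    _ = ∑ k ∈ s, ∫ ω, Y k ω ^ 2 ∂μ := by
        refine Finset.sum_congr rfl fun j hj => ?_
        rw [Finset.sum_eq_single_of_mem j hj fun k _ hkj => ?_]
        · simp_rw [sq]
        rcases hkj.lt_or_gt with h | h
        · simp_rw [mul_comm (Y j _)]
          exact hcross k j h
        · exact hcross j k h

theorem indicator [IsFiniteMeasure μ] (hY : IsL2MartingaleDiff μ 𝒢 Y) {s : ℕ → Set Ω}
    (hs : ∀ k, MeasurableSet[𝒢 (k - 1)] (s k)) :
    IsL2MartingaleDiff μ 𝒢 fun k => (s k).indicator (Y k) where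
  stronglyMeasurable k := (hY.stronglyMeasurable k).indicator (𝒢.mono (k.sub_le 1) _ (hs k))
  memLp k := (hY.memLp k).indicator (𝒢.le _ _ (hs k))
  condExp_eq_zero k := by
    filter_upwards [condExp_indicator ((hY.memLp k).integrable one_le_two) (hs k),
      hY.condExp_eq_zero k] with ω hind hzero
    simp [hind, hzero]

theorem integral_sq_sum_indicator_partialSumSublevel_le [IsProbabilityMeasure μ]
    (hY : IsL2MartingaleDiff μ 𝒢 Y)
    (hA : ∀ k, StronglyMeasurable[𝒢 (k - 1)] (A k))
    (hYA : ∀ k, μ[fun ω => Y k ω ^ 2|𝒢 (k - 1)] ≤ᵐ[μ] A k) {η : ℝ} (hη : 0 ≤ η) (n : ℕ) :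
    ∫ ω, (∑ k ∈ Finset.Icc 1 n, (partialSumSublevel A η k).indicator (Y k) ω) ^ 2 ∂μ ≤ η := by
  set s := partialSumSublevel A η
  set E := fun k => μ[fun ω => Y k ω ^ 2|𝒢 (k - 1)]
  have hs := measurableSet_partialSumSublevel 𝒢 hA η
  have hsq : ∀ k, ∫ ω, (s k).indicator (Y k) ω ^ 2 ∂μ = ∫ ω, (s k).indicator (E k) ω ∂μ := by
    intro k
    have hpow : ∀ ω, (s k).indicator (Y k) ω ^ 2 = (s k).indicator (fun ω => Y k ω ^ 2) ω :=
      fun ω => by by_cases h : ω ∈ s k <;> simp [h]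
    simp_rw [hpow]
    rw [integral_indicator (𝒢.le _ _ (hs k)), integral_indicator (𝒢.le _ _ (hs k))]
    exact (setIntegral_condExp (𝒢.le _) (hY.memLp k).integrable_sq (hs k)).symm
  have hE : ∀ k, 0 ≤ᵐ[μ] E k := fun k => condExp_nonneg (.of_forall fun ω => sq_nonneg _)
  have hbound : ∀ᵐ ω ∂μ, ∑ k ∈ Finset.Icc 1 n, (s k).indicator (E k) ω ≤ η := by
    filter_upwards [ae_all_iff.2 hE, ae_all_iff.2 hYA] with ω hEω hAω
    calc ∑ k ∈ Finset.Icc 1 n, (s k).indicator (E k) ω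
        ≤ ∑ k ∈ Finset.Icc 1 n, (s k).indicator (A k) ω :=
          Finset.sum_le_sum fun k _ => Set.indicator_le_indicator (hAω k)
      _ ≤ η := by
          simpa only [s, partialSumSublevel, Set.indicator_apply, Set.mem_ofPred_eq] using
            sum_ite_partialSum_le (g := (A · ω)) (fun k => (hEω k).trans (hAω k)) hη n
  calc ∫ ω, (∑ k ∈ Finset.Icc 1 n, (s k).indicator (Y k) ω) ^ 2 ∂μ
      = ∑ k ∈ Finset.Icc 1 n, ∫ ω, (s k).indicator (E k) ω ∂μ := by
        rw [(hY.indicator hs).integral_sq_sum]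
        exact Finset.sum_congr rfl fun k _ => hsq k
    _ = ∫ ω, ∑ k ∈ Finset.Icc 1 n, (s k).indicator (E k) ω ∂μ :=
        (integral_finsetSum _ fun k _ => integrable_condExp.indicator (𝒢.le _ _ (hs k))).symm
    _ ≤ ∫ _, η ∂μ := integral_mono_ae
        (integrable_finsetSum _ fun k _ => integrable_condExp.indicator (𝒢.le _ _ (hs k)))
        (integrable_const η) hbound
    _ = η := by simp

theorem measure_le_abs_sum_le [IsProbabilityMeasure μ] (hY : IsL2MartingaleDiff μ 𝒢 Y)
    (hA : ∀ k, StronglyMeasurable[𝒢 (k - 1)] (A k))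
    (hYA : ∀ k, μ[fun ω => Y k ω ^ 2|𝒢 (k - 1)] ≤ᵐ[μ] A k) (n : ℕ) {ε η : ℝ} (hε : 0 < ε)
    (hη : 0 ≤ η) :
    μ {ω | ε ≤ |∑ k ∈ Finset.Icc 1 n, Y k ω|}
      ≤ ENNReal.ofReal (η / ε ^ 2) + μ {ω | η < ∑ k ∈ Finset.Icc 1 n, A k ω} := by
  set s := partialSumSublevel A η
  set T := fun ω => ∑ k ∈ Finset.Icc 1 n, (s k).indicator (Y k) ω
  have hA0 : ∀ᵐ ω ∂μ, ∀ k, 0 ≤ A k ω := ae_all_iff.2 fun k =>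
    (condExp_nonneg (.of_forall fun ω => sq_nonneg (Y k ω))).trans (hYA k)
  have hTY : ∀ᵐ ω ∂μ, ∑ k ∈ Finset.Icc 1 n, A k ω ≤ η → T ω = ∑ k ∈ Finset.Icc 1 n, Y k ω := by
    filter_upwards [hA0] with ω hAω hsum
    refine Finset.sum_congr rfl fun k hk => Set.indicator_of_mem ?_ _
    exact (Finset.sum_le_sum_of_subset_of_nonneg
      (Finset.Icc_subset_Icc_right (Finset.mem_Icc.1 hk).2) fun i _ _ => hAω i).trans hsum
  have hTL2 : MemLp T 2 μ :=
    memLp_finsetSum _ fun k _ => (hY.indicator (measurableSet_partialSumSublevel 𝒢 hA η)).memLp k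
  calc μ {ω | ε ≤ |∑ k ∈ Finset.Icc 1 n, Y k ω|}
      ≤ μ ({ω | ε ≤ |T ω|} ∪ {ω | η < ∑ k ∈ Finset.Icc 1 n, A k ω}) := by
        refine measure_mono_ae ?_
        filter_upwards [hTY] with ω hω hmem
        by_cases h : ∑ k ∈ Finset.Icc 1 n, A k ω ≤ η
        · left
          show ε ≤ |T ω|
          rwa [hω h]
        · exact Or.inr (not_le.1 h)
    _ ≤ μ {ω | ε ≤ |T ω|} + μ {ω | η < ∑ k ∈ Finset.Icc 1 n, A k ω} := measure_union_le _ _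
    _ ≤ ENNReal.ofReal (η / ε ^ 2) + μ {ω | η < ∑ k ∈ Finset.Icc 1 n, A k ω} := by
        gcongr
        refine (meas_ge_le_integral_sq_div_sq hTL2.integrable_sq hε).trans ?_
        gcongr
        exact hY.integral_sq_sum_indicator_partialSumSublevel_le hA hYA hη n

end IsL2MartingaleDiff

theorem tendstoInMeasure_sum_of_condExp_sq_le [IsProbabilityMeasure μ]
    (𝒢 : ℕ → Filtration ℕ m0) {Y A : ℕ → ℕ → Ω → ℝ} (hY : ∀ n, IsL2MartingaleDiff μ (𝒢 n) (Y n))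
    (hA : ∀ n k, StronglyMeasurable[𝒢 n (k - 1)] (A n k))
    (hYA : ∀ n k, μ[fun ω => Y n k ω ^ 2|𝒢 n (k - 1)] ≤ᵐ[μ] A n k)
    (hAlim : TendstoInMeasure μ (fun n ω => ∑ k ∈ Finset.Icc 1 n, A n k ω) atTop fun _ => 0) :
    TendstoInMeasure μ (fun n ω => ∑ k ∈ Finset.Icc 1 n, Y n k ω) atTop fun _ => 0 := by
  rw [tendstoInMeasure_iff_dist] at hAlim ⊢
  intro ε hε
  refine ENNReal.tendsto_nhds_zero.2 fun δ hδ => ?_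
  obtain ⟨r, -, hr0, hrδ⟩ := ENNReal.lt_iff_exists_real_btwn.1 hδ
  have hr : 0 < r := ENNReal.ofReal_pos.1 hr0
  set η := ε ^ 2 * (r / 2)
  have hη : 0 < η := by positivity
  filter_upwards [ENNReal.tendsto_nhds_zero.1 (hAlim η hη) (ENNReal.ofReal (r / 2))
    (by simpa using hr)] with n hn
  calc μ {ω | ε ≤ dist (∑ k ∈ Finset.Icc 1 n, Y n k ω) 0}
      = μ {ω | ε ≤ |∑ k ∈ Finset.Icc 1 n, Y n k ω|} := by simp only [Real.dist_eq, sub_zero]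
    _ ≤ ENNReal.ofReal (η / ε ^ 2) + μ {ω | η < ∑ k ∈ Finset.Icc 1 n, A n k ω} :=
        (hY n).measure_le_abs_sum_le (hA n) (hYA n) n hε hη.le
    _ ≤ ENNReal.ofReal (r / 2) + ENNReal.ofReal (r / 2) := by
        refine add_le_add (by rw [mul_div_cancel_left₀ _ (by positivity)]) ?_
        refine (measure_mono fun ω (hω : η < _) => ?_).trans hn
        simpa only [Set.mem_ofPred_eq, Real.dist_eq, sub_zero] using hω.le.trans (le_abs_self _)
    _ ≤ δ := by
        rw [← ENNReal.ofReal_add (half_pos hr).le (half_pos hr).le, add_halves]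
        exact hrδ.le

theorem MeasureTheory.TendstoInMeasure.add {E : Type*} [SeminormedAddCommGroup E] {ι : Type*}
    {l : Filter ι} {f g : ι → Ω → E} {F G : Ω → E}
    (hf : TendstoInMeasure μ f l F) (hg : TendstoInMeasure μ g l G) :
    TendstoInMeasure μ (fun n ω => f n ω + g n ω) l (fun ω => F ω + G ω) := by
  rw [tendstoInMeasure_iff_dist] at hf hg ⊢
  intro ε hε
  have hsplit : ∀ n, μ {ω | ε ≤ dist (f n ω + g n ω) (F ω + G ω)}
      ≤ μ {ω | ε / 2 ≤ dist (f n ω) (F ω)} + μ {ω | ε / 2 ≤ dist (g n ω) (G ω)} := fun n => by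
    refine (measure_mono fun ω hω => ?_).trans (measure_union_le _ _)
    by_contra! h
    simp only [Set.mem_union, Set.mem_ofPred_eq, not_or, not_le] at h hω
    linarith [dist_add_add_le (f n ω) (g n ω) (F ω) (G ω)]
  have hbound : Tendsto (fun n => μ {ω | ε / 2 ≤ dist (f n ω) (F ω)}
      + μ {ω | ε / 2 ≤ dist (g n ω) (G ω)}) l (𝓝 0) := by
    simpa using (hf _ (half_pos hε)).add (hg _ (half_pos hε))
  exact tendsto_of_tendsto_of_tendsto_of_le_of_le tendsto_const_nhds hbound
    (fun _ => zero_le) hsplit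

end Development

theorem stmt16_general {Ω : Type*} {m0 : MeasurableSpace Ω} (μ : Measure Ω) [IsProbabilityMeasure μ]
    (ℱ : ℕ → ℕ → MeasurableSpace Ω)
    (hℱle : ∀ n k, ℱ n k ≤ m0)
    (hℱmono : ∀ n, Monotone (ℱ n))
    (X : ℕ → ℕ → Ω → ℝ)
    (hmeas : ∀ n k, StronglyMeasurable[ℱ n k] (X n k))
    (hint2 : ∀ n k, Integrable (fun ω => (X n k ω) ^ 2) μ)
    (U : Ω → ℝ)
    (h1 : TendstoInMeasure μ
      (fun n ω => ∑ k ∈ Finset.Icc 1 n, (μ[X n k|ℱ n (k - 1)]) ω) atTop U)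
    (h2 : TendstoInMeasure μ
      (fun n ω => ∑ k ∈ Finset.Icc 1 n, (μ[fun ω' => (X n k ω') ^ 2|ℱ n (k - 1)]) ω) atTop
      (fun _ => 0)) :
    TendstoInMeasure μ (fun n ω => ∑ k ∈ Finset.Icc 1 n, X n k ω) atTop U := by
  let 𝒢 : ℕ → Filtration ℕ m0 := fun n => ⟨ℱ n, hℱmono n, hℱle n⟩
  have hL2 : ∀ n k, MemLp (X n k) 2 μ := fun n k =>
    (memLp_two_iff_integrable_sq ((hmeas n k).mono (hℱle n k)).aestronglyMeasurable).2 (hint2 n k)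
  have hmart : TendstoInMeasure μ
      (fun n ω => ∑ k ∈ Finset.Icc 1 n, (X n k - μ[X n k|ℱ n (k - 1)]) ω) atTop fun _ => 0 :=
    tendstoInMeasure_sum_of_condExp_sq_le 𝒢
      (fun n => isL2MartingaleDiff_sub_condExp (𝒢 n) (hmeas n) (hL2 n))
      (fun _ _ => stronglyMeasurable_condExp)
      (fun n k => ProbabilityTheory.condVar_ae_le_condExp_sq (hℱle n _) (hL2 n k)) h2
  refine (hmart.add h1).congr (fun n => .of_forall fun ω => ?_) (.of_forall fun ω => zero_add (U ω))
  simp only [Pi.sub_apply, Finset.sum_sub_distrib, sub_add_cancel]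

/-- Lemma 9 of Genon-Catalot and Jacod (1993): for a triangular array `(X_{n,k})` with
`X_{n,k}` measurable w.r.t. the filtration `ℱ n k`, if
`Σ_{k=1}^n E[X_{n,k}|ℱ_{k-1}] → U` and `Σ_{k=1}^n E[X_{n,k}²|ℱ_{k-1}] → 0` in probability,
then `Σ_{k=1}^n X_{n,k} → U` in probability. -/
theorem stmt16 {Ω : Type*} {m0 : MeasurableSpace Ω} (μ : Measure Ω) [IsProbabilityMeasure μ]
    (ℱ : ℕ → ℕ → MeasurableSpace Ω)
    (hℱle : ∀ n k, ℱ n k ≤ m0)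
    (hℱmono : ∀ n, Monotone (ℱ n))
    (X : ℕ → ℕ → Ω → ℝ)
    (hmeas : ∀ n k, StronglyMeasurable[ℱ n k] (X n k))
    (hint : ∀ n k, Integrable (X n k) μ)
    (hint2 : ∀ n k, Integrable (fun ω => (X n k ω) ^ 2) μ)
    (U : Ω → ℝ)
    (h1 : TendstoInMeasure μ
      (fun n ω => ∑ k ∈ Finset.Icc 1 n, (μ[X n k|ℱ n (k - 1)]) ω) atTop U)
    (h2 : TendstoInMeasure μ
      (fun n ω => ∑ k ∈ Finset.Icc 1 n, (μ[fun ω' => (X n k ω') ^ 2|ℱ n (k - 1)]) ω) atTop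
      (fun _ => 0)) :
    TendstoInMeasure μ (fun n ω => ∑ k ∈ Finset.Icc 1 n, X n k ω) atTop U :=
  stmt16_general μ ℱ hℱle hℱmono X hmeas hint2 U h1 h2
end
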